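/- For any conditionally convergent series ∑ aₙ, the set of all A ⊆ ℕ such that limsup_m ∑_{n ∈ A ∩ [0,m]} aₙ = +∞ and liminf_m ∑_{n ∈ A ∩ [0,m]} aₙ = −∞ is a comeager subset of the Cantor space 2^ℕ. -/
import Mathlib


open Filter Topology

/-- Partial sums of the subseries of `a` over the set `A`, up to index `m`. -/
noncomputable def psum (a : ℕ → ℝ) (A : Set ℕ) (m : ℕ) : ℝ :=
  ∑ n ∈ Finset.range (m + 1), Set.indicator A a n

/-- A series `∑ aₙ` is conditionally convergent: its partial sums converge
but the partial sums of `∑ |aₙ|` tend to infinity. -/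
def CondConv (a : ℕ → ℝ) : Prop :=
  (∃ L : ℝ, Tendsto (fun m => ∑ n ∈ Finset.range m, a n) atTop (𝓝 L)) ∧
  Tendsto (fun m => ∑ n ∈ Finset.range m, |a n|) atTop atTop

private noncomputable def SS (a : ℕ → ℝ) (s : ℕ → Bool) (m : ℕ) : ℝ :=
  ∑ n ∈ Finset.range (m + 1), if s n then a n else 0

private lemma continuous_SS (a : ℕ → ℝ) (m : ℕ) : Continuous fun s => SS a s m := by
  unfold SS
  refine continuous_finset_sum _ fun n _ => ?_
  exact (continuous_of_discreteTopology
    (f := fun b : Bool => if b then a n else 0)).comp (continuous_apply n)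

/-- Positive parts of a conditionally convergent series diverge. -/
private lemma pos_part_div (a : ℕ → ℝ) (h : CondConv a) :
    Tendsto (fun m => ∑ n ∈ Finset.range m, max (a n) 0) atTop atTop := by
  obtain ⟨⟨L, hL⟩, habs⟩ := h
  have key : ∀ m, ∑ n ∈ Finset.range m, max (a n) 0
      = ((∑ n ∈ Finset.range m, a n) + ∑ n ∈ Finset.range m, |a n|) / 2 := by
    intro m
    rw [← Finset.sum_add_distrib, Finset.sum_div]
    refine Finset.sum_congr rfl fun n _ => ?_
    rcases le_or_gt 0 (a n) with hn | hn
    · rw [abs_of_nonneg hn, max_eq_left hn]; ring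
    · rw [abs_of_neg hn, max_eq_right hn.le]; ring
  simp only [key]
  exact (hL.add_atTop habs).atTop_div_const (by norm_num)

/-- The key density lemma: the set of `s` whose subseries partial sum
exceeds `M` at some index `≥ k` is dense, provided positive parts diverge. -/
private lemma dense_U (a : ℕ → ℝ)
    (hpos : Tendsto (fun m => ∑ n ∈ Finset.range m, max (a n) 0) atTop atTop)
    (M : ℝ) (k : ℕ) :
    Dense {s : ℕ → Bool | ∃ m, k ≤ m ∧ M < SS a s m} := by
  rw [dense_iff_inter_open]
  rintro V hV ⟨f, hf⟩
  obtain ⟨I, u, hu, hsub⟩ := isOpen_pi_iff.1 hV f hf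
  set N : ℕ := I.sup id + 1 with hN
  have hIN : ∀ i ∈ I, i < N := fun i hi =>
    Nat.lt_succ_of_le (Finset.le_sup (f := id) hi)
  set t : ℕ → Bool := fun n => if n < N then f n else decide (0 < a n) with ht
  have htV : t ∈ V := by
    apply hsub
    intro i hi
    have : t i = f i := by simp [ht, hIN i hi]
    rw [this]
    exact (hu i hi).2
  -- the partial sums along `t` diverge
  set C : ℝ := ∑ n ∈ Finset.range N, ((if t n then a n else 0) - max (a n) 0) with hC
  have hkey : ∀ m, N ≤ m + 1 →
      SS a t m = (∑ n ∈ Finset.range (m + 1), max (a n) 0) + C := by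
    intro m hm
    have hsubset : Finset.range N ⊆ Finset.range (m + 1) :=
      Finset.range_subset_range.2 hm
    have hzero : ∀ n ∈ Finset.range (m + 1), n ∉ Finset.range N →
        ((if t n then a n else 0) - max (a n) 0) = 0 := by
      intro n _ hn
      have hnN : ¬ n < N := by simpa using hn
      have : t n = decide (0 < a n) := by simp [ht, hnN]
      rw [this]
      rcases le_or_gt (a n) 0 with h1 | h1
      · simp [not_lt.2 h1, max_eq_right h1]
      · simp [h1, max_eq_left h1.le]
    have hsum : ∑ n ∈ Finset.range (m + 1), ((if t n then a n else 0) - max (a n) 0)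
        = C := by rw [hC]; exact (Finset.sum_subset hsubset hzero).symm
    have : SS a t m - (∑ n ∈ Finset.range (m + 1), max (a n) 0) = C := by
      rw [← hsum, SS, Finset.sum_sub_distrib]
    linarith
  have htend : Tendsto (fun m => SS a t m) atTop atTop := by
    have h1 : Tendsto (fun m => (∑ n ∈ Finset.range (m + 1), max (a n) 0) + C)
        atTop atTop :=
      tendsto_atTop_add_const_right _ C (hpos.comp (tendsto_add_atTop_nat 1))
    refine h1.congr' ?_
    filter_upwards [eventually_ge_atTop N] with m hm
    exact (hkey m (le_trans hm (Nat.le_succ m))).symm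
  obtain ⟨m, hm⟩ := ((htend.eventually (eventually_gt_atTop M)).and
    (eventually_ge_atTop k)).exists
  exact ⟨t, htV, ⟨m, hm.2, hm.1⟩⟩

private lemma isOpen_U (a : ℕ → ℝ) (M : ℝ) (k : ℕ) :
    IsOpen {s : ℕ → Bool | ∃ m, k ≤ m ∧ M < SS a s m} := by
  have : {s : ℕ → Bool | ∃ m, k ≤ m ∧ M < SS a s m}
      = ⋃ m, {s : ℕ → Bool | k ≤ m ∧ M < SS a s m} := by
    ext s; simp [Set.mem_iUnion]
  rw [this]
  refine isOpen_iUnion fun m => ?_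
  by_cases hkm : k ≤ m
  · have : {s : ℕ → Bool | k ≤ m ∧ M < SS a s m}
        = (fun s => SS a s m) ⁻¹' Set.Ioi M := by
      ext s; simp [hkm, Set.mem_Ioi]
    rw [this]
    exact (continuous_SS a m).isOpen_preimage _ isOpen_Ioi
  · have : {s : ℕ → Bool | k ≤ m ∧ M < SS a s m} = ∅ := by
      ext s; simp [hkm]
    rw [this]; exact isOpen_empty

/-- The set of `s` for which the subseries partial sums are unbounded above
is residual. -/
private lemma residual_unbounded (a : ℕ → ℝ)
    (hpos : Tendsto (fun m => ∑ n ∈ Finset.range m, max (a n) 0) atTop atTop) :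
    {s : ℕ → Bool | ∀ (M : ℝ) (k : ℕ), ∃ m, k ≤ m ∧ M < SS a s m}
      ∈ residual (ℕ → Bool) := by
  have hsub : (⋂ (M : ℕ), ⋂ (k : ℕ), {s : ℕ → Bool | ∃ m, k ≤ m ∧ (M : ℝ) < SS a s m})
      ⊆ {s : ℕ → Bool | ∀ (M : ℝ) (k : ℕ), ∃ m, k ≤ m ∧ M < SS a s m} := by
    intro s hs M k
    simp only [Set.mem_iInter, Set.mem_setOf_eq] at hs
    obtain ⟨m, hm1, hm2⟩ := hs ⌈M⌉₊ k
    exact ⟨m, hm1, lt_of_le_of_lt (Nat.le_ceil M) hm2⟩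
  refine mem_of_superset ?_ hsub
  refine countable_iInter_mem.2 fun M => countable_iInter_mem.2 fun k => ?_
  exact residual_of_dense_open (isOpen_U a _ k) (dense_U a hpos _ k)

theorem stmt6 (a : ℕ → ℝ) (h : CondConv a) :
    {s : ℕ → Bool |
      Filter.limsup
        (fun m => ((∑ n ∈ Finset.range (m + 1), if s n then a n else 0 : ℝ) : EReal))
        atTop = ⊤ ∧
      Filter.liminf
        (fun m => ((∑ n ∈ Finset.range (m + 1), if s n then a n else 0 : ℝ) : EReal))
        atTop = ⊥} ∈ residual (ℕ → Bool) := by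
  have hpos := pos_part_div a h
  have hneg : Tendsto (fun m => ∑ n ∈ Finset.range m, max ((-a) n) 0) atTop atTop := by
    refine pos_part_div (-a) ⟨⟨-h.1.choose, ?_⟩, ?_⟩
    · have := h.1.choose_spec
      simpa [Finset.sum_neg_distrib] using this.neg
    · simpa [abs_neg] using h.2
  have hA := residual_unbounded a hpos
  have hB := residual_unbounded (-a) hneg
  refine mem_of_superset (inter_mem hA hB) ?_
  rintro s ⟨hsA, hsB⟩
  simp only [Set.mem_setOf_eq] at hsA hsB ⊢
  have hSSneg : ∀ m, SS (-a) s m = - SS a s m := by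
    intro m
    unfold SS
    rw [← Finset.sum_neg_distrib]
    refine Finset.sum_congr rfl fun n _ => ?_
    by_cases hn : s n <;> simp [hn]
  constructor
  · -- limsup = ⊤
    rw [show (fun m => ((∑ n ∈ Finset.range (m + 1), if s n then a n else 0 : ℝ) : EReal))
        = fun m => ((SS a s m : ℝ) : EReal) from rfl]
    rw [limsup_eq]
    refine top_unique (le_sInf fun b hb => ?_)
    simp only [Set.mem_setOf_eq] at hb
    rw [top_le_iff]
    by_contra hbne
    obtain ⟨x, hx⟩ : ∃ x : ℝ, b < (x : EReal) := by
      induction b with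
      | bot => exact ⟨0, EReal.bot_lt_coe 0⟩
      | coe y => exact ⟨y + 1, EReal.coe_lt_coe_iff.2 (lt_add_one y)⟩
      | top => exact absurd rfl hbne
    have hfreq : ∃ᶠ m in atTop, x < SS a s m :=
      frequently_atTop.2 fun k => by
        obtain ⟨m, hm1, hm2⟩ := hsA x k; exact ⟨m, hm1, hm2⟩
    obtain ⟨m, hm1, hm2⟩ := (hfreq.and_eventually hb).exists
    exact absurd hm2 (not_le.2 (hx.trans (EReal.coe_lt_coe_iff.2 hm1)))
  · -- liminf = ⊥
    rw [show (fun m => ((∑ n ∈ Finset.range (m + 1), if s n then a n else 0 : ℝ) : EReal))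
        = fun m => ((SS a s m : ℝ) : EReal) from rfl]
    rw [liminf_eq]
    refine bot_unique (sSup_le fun b hb => ?_)
    simp only [Set.mem_setOf_eq] at hb
    rw [le_bot_iff]
    by_contra hbne
    obtain ⟨x, hx⟩ : ∃ x : ℝ, (x : EReal) < b := by
      induction b with
      | bot => exact absurd rfl hbne
      | coe y => exact ⟨y - 1, EReal.coe_lt_coe_iff.2 (by linarith)⟩
      | top => exact ⟨0, EReal.coe_lt_top 0⟩
    have hfreq : ∃ᶠ m in atTop, SS a s m < x :=
      frequently_atTop.2 fun k => by
        obtain ⟨m, hm1, hm2⟩ := hsB (-x) k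
        rw [hSSneg m] at hm2
        exact ⟨m, hm1, by linarith⟩
    obtain ⟨m, hm1, hm2⟩ := (hfreq.and_eventually hb).exists
    exact absurd hm2 (not_le.2 ((EReal.coe_lt_coe_iff.2 hm1).trans hx))
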